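/- Let $X,Y,Z,\gamma,\eta$ be non-negative functions on $[0,T]$, with $X$ and $Y$ absolutely continuous, $Z$ measurable, $\gamma$ and $\eta$ integrable over $[0,T]$, and let $A>0$ be a constant. Suppose that for almost every $t\in[0,T]$: $\frac{d}{dt}X(t)\le A Z^{1/2}(t)$ and $\frac{d}{dt}Y(t)+Z(t)\le \gamma(t)Y(t)+\eta(t)X^2(t)$, and that $X(0)=0$. Then for every $t\in[0,T]$: $X(t)\le A\,Y^{1/2}(0)\,t^{1/2}\,e^{\frac12\int_0^t(\gamma(s)+A^2 s\,\eta(s))\,ds}$ and $Y(t)+\int_0^t Z(s)\,ds\le Y(0)\,e^{\int_0^t(\gamma(s)+A^2 s\,\eta(s))\,ds}$. -/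

import Mathlib

/-!
Put `g s = γ s + A² s η s` and `W t = Y t + ∫₀ᵗ Z`. Since `X 0 = 0`, integrating the first
inequality and applying Cauchy–Schwarz gives `X t ≤ A √t (∫₀ᵗ Z)^{1/2} ≤ A √t (W t)^{1/2}`, hence
`η X² ≤ A² t η W`, and integrating the second inequality yields `W t ≤ Y 0 + ∫₀ᵗ g W`. Grönwall's
lemma then gives `W t ≤ Y 0 e^{∫₀ᵗ g}`, which is the second claim and, fed back into the bound on
`X`, the first. Grönwall's lemma for a merely integrable `g` holds because
`(C + ∫ₐᵗ g W) e^{-∫ₐᵗ g}` is absolutely continuous with almost everywhere nonpositive derivative.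
-/

open MeasureTheory Real Filter Set

theorem LipschitzOnWith.comp_absolutelyContinuousOnInterval {X Y : Type*}
    [PseudoMetricSpace X] [PseudoMetricSpace Y] {φ : X → Y} {K : NNReal} {s : Set X}
    {f : ℝ → X} {a b : ℝ} (hφ : LipschitzOnWith K φ s)
    (hf : AbsolutelyContinuousOnInterval f a b) (hfs : MapsTo f (uIcc a b) s) :
    AbsolutelyContinuousOnInterval (φ ∘ f) a b := by
  unfold AbsolutelyContinuousOnInterval at hf ⊢
  have hK := hf.const_mul (K : ℝ)
  rw [mul_zero] at hK
  refine squeeze_zero' (Eventually.of_forall fun E ↦ Finset.sum_nonneg fun _ _ ↦ dist_nonneg)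
    ?_ hK
  filter_upwards [mem_inf_of_right (mem_principal_self _)] with E hE
  rw [Finset.mul_sum]
  exact Finset.sum_le_sum fun i hi ↦
    hφ.dist_le_mul _ (hfs (hE.1 i hi).1) _ (hfs (hE.1 i hi).2)

theorem LocallyLipschitz.comp_absolutelyContinuousOnInterval {E X : Type*}
    [SeminormedAddCommGroup E] [PseudoMetricSpace X] {φ : E → X} {f : ℝ → E} {a b : ℝ}
    (hφ : LocallyLipschitz φ) (hf : AbsolutelyContinuousOnInterval f a b) :
    AbsolutelyContinuousOnInterval (φ ∘ f) a b := by
  obtain ⟨K, hK⟩ := hφ.locallyLipschitzOn.exists_lipschitzOnWith_of_compact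
    (isCompact_uIcc.image_of_continuousOn hf.continuousOn)
  exact hK.comp_absolutelyContinuousOnInterval hf (mapsTo_image f _)

theorem AbsolutelyContinuousOnInterval.le_of_ae_deriv_nonpos {f : ℝ → ℝ} {a b : ℝ}
    (hf : AbsolutelyContinuousOnInterval f a b) (hab : a ≤ b)
    (hf' : ∀ᵐ x, x ∈ Icc a b → deriv f x ≤ 0) : f b ≤ f a := by
  have h := intervalIntegral.integral_nonneg_of_ae_restrict hab
    ((ae_restrict_iff' measurableSet_Icc).2 (hf'.mono fun x hx h ↦ neg_nonneg.2 (hx h)))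
  rw [intervalIntegral.integral_neg, hf.integral_deriv_eq_sub] at h
  linarith

theorem le_mul_exp_integral_of_le_add_integral {g W : ℝ → ℝ} {a b C : ℝ}
    (hg : IntervalIntegrable g volume a b) (hg₀ : ∀ x ∈ Icc a b, 0 ≤ g x)
    (hgW : IntervalIntegrable (fun x ↦ g x * W x) volume a b)
    (hW : ∀ x ∈ Icc a b, W x ≤ C + ∫ y in a..x, g y * W y) :
    ∀ t ∈ Icc a b, W t ≤ C * exp (∫ x in a..t, g x) := by
  set G : ℝ → ℝ := fun x ↦ ∫ y in a..x, g y
  set R : ℝ → ℝ := fun x ↦ ∫ y in a..x, g y * W y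
  have hAC : AbsolutelyContinuousOnInterval (fun x ↦ (C + R x) * exp (-G x)) a b := by
    have hG := hg.absolutelyContinuousOnInterval_intervalIntegral left_mem_uIcc
    have hR := hgW.absolutelyContinuousOnInterval_intervalIntegral left_mem_uIcc
    have hC := (LipschitzWith.const (α := ℝ) C).lipschitzOnWith (s := uIcc a b)
    exact (hC.absolutelyContinuousOnInterval.fun_add hR).fun_mul
      (contDiff_exp.locallyLipschitz.comp_absolutelyContinuousOnInterval hG.fun_neg)
  have hderiv : ∀ᵐ x, x ∈ Icc a b → deriv (fun x ↦ (C + R x) * exp (-G x)) x ≤ 0 := by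
    filter_upwards [hg.ae_hasDerivAt_integral, hgW.ae_hasDerivAt_integral] with x hGx hRx hx
    have hH : HasDerivAt (fun x ↦ (C + R x) * exp (-G x))
        (g x * W x * exp (-G x) + (C + R x) * (exp (-G x) * -g x)) x :=
      ((hRx (Icc_subset_uIcc hx) a left_mem_uIcc).const_add C).mul
        (hGx (Icc_subset_uIcc hx) a left_mem_uIcc).neg.exp
    rw [hH.deriv]
    calc _ = g x * exp (-G x) * (W x - (C + R x)) := by ring
      _ ≤ 0 := mul_nonpos_of_nonneg_of_nonpos (by have := hg₀ x hx; positivity)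
          (sub_nonpos.2 (hW x hx))
  intro t ht
  have key := (hAC.mono (uIcc_subset_uIcc_left (Icc_subset_uIcc ht))).le_of_ae_deriv_nonpos ht.1
    (hderiv.mono fun x hx hxt ↦ hx ⟨hxt.1, hxt.2.trans ht.2⟩)
  simp only [R, G, intervalIntegral.integral_same, add_zero, neg_zero, exp_zero, mul_one] at key
  calc W t ≤ C + R t := hW t ht
    _ = (C + R t) * exp (-G t) * exp (G t) := by rw [mul_assoc, ← exp_add]; simp
    _ ≤ C * exp (G t) := by gcongr

theorem IntervalIntegrable.sqrt {f : ℝ → ℝ} {a b : ℝ} (hf : IntervalIntegrable f volume a b) :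
    IntervalIntegrable (fun x ↦ √(f x)) volume a b := by
  refine ((intervalIntegrable_const (c := (1 : ℝ))).add hf.abs).mono_fun'
    (continuous_sqrt.comp_aestronglyMeasurable hf.def'.aestronglyMeasurable) (ae_of_all _ ?_)
  intro x
  dsimp only
  rw [norm_of_nonneg (sqrt_nonneg _)]
  rcases le_total (f x) 0 with h | h
  · rw [sqrt_eq_zero_of_nonpos h]; positivity
  · nlinarith [sq_sqrt h, sqrt_nonneg (f x), le_abs_self (f x)]

theorem integral_sqrt_le_sqrt_mul_sqrt_integral {f : ℝ → ℝ} {a b : ℝ} (hab : a ≤ b)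
    (hf : IntervalIntegrable f volume a b) (hf₀ : ∀ x ∈ Ioc a b, 0 ≤ f x) :
    ∫ x in a..b, √(f x) ≤ √(b - a) * √(∫ x in a..b, f x) := by
  set μ := volume.restrict (Ioc a b)
  have hsq : (fun x ↦ √(f x) ^ 2) =ᵐ[μ] f := by
    filter_upwards [ae_restrict_mem measurableSet_Ioc] with x hx using sq_sqrt (hf₀ x hx)
  have hmem : MemLp (fun x ↦ √(f x)) (ENNReal.ofReal 2) μ := by
    rw [ENNReal.ofReal_ofNat, memLp_two_iff_integrable_sq hf.sqrt.aestronglyMeasurable]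
    exact ((intervalIntegrable_iff_integrableOn_Ioc_of_le hab).1 hf).congr hsq.symm
  have hH := integral_mul_le_Lp_mul_Lq_of_nonneg HolderConjugate.two_two
    (ae_of_all _ fun x ↦ sqrt_nonneg (f x)) (ae_of_all _ fun _ ↦ zero_le_one) hmem
    (memLp_const (1 : ℝ))
  simp only [mul_one, rpow_two, one_pow, integral_const, smul_eq_mul, ← sqrt_eq_rpow] at hH
  rw [integral_congr_ae hsq, measureReal_restrict_apply_univ, Real.volume_real_Ioc_of_le hab,
    mul_comm] at hH
  rwa [intervalIntegral.integral_of_le hab, intervalIntegral.integral_of_le hab]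

theorem continuousOn_Icc_of_eq_add_integral {f f' : ℝ → ℝ} {a b : ℝ}
    (hf' : IntervalIntegrable f' volume a b) (hf : ∀ t ∈ Icc a b, f t = f a + ∫ s in a..t, f' s) :
    ContinuousOn f (Icc a b) :=
  ((continuousOn_const.add (intervalIntegral.continuousOn_primitive_interval' hf'
    left_mem_uIcc)).mono Icc_subset_uIcc).congr hf

theorem IntervalIntegrable.of_nonneg_of_add_le {f g h : ℝ → ℝ} {a b : ℝ} (hab : a ≤ b)
    (hg : IntervalIntegrable g volume a b) (hh : IntervalIntegrable h volume a b)
    (hf : AEStronglyMeasurable f (volume.restrict (Icc a b))) (hf₀ : ∀ x ∈ Icc a b, 0 ≤ f x)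
    (hfgh : ∀ᵐ x ∂volume.restrict (Icc a b), g x + f x ≤ h x) :
    IntervalIntegrable f volume a b := by
  rw [intervalIntegrable_iff_integrableOn_Icc_of_le hab] at hg hh ⊢
  refine (hh.sub hg).mono' hf ?_
  filter_upwards [hfgh, ae_restrict_mem measurableSet_Icc] with x hx hxab
  rw [norm_of_nonneg (hf₀ x hxab), Pi.sub_apply]
  linarith

theorem integral_le_mul_sqrt_mul_sqrt_integral {f g : ℝ → ℝ} {a b A : ℝ} (hab : a ≤ b)
    (hA : 0 ≤ A) (hf : IntervalIntegrable f volume a b) (hg : IntervalIntegrable g volume a b)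
    (hg₀ : ∀ x ∈ Ioc a b, 0 ≤ g x) (hfg : ∀ᵐ x ∂volume.restrict (Icc a b), f x ≤ A * √(g x)) :
    ∫ x in a..b, f x ≤ A * √(b - a) * √(∫ x in a..b, g x) := by
  calc ∫ x in a..b, f x ≤ ∫ x in a..b, A * √(g x) :=
        intervalIntegral.integral_mono_ae_restrict hab hf (hg.sqrt.const_mul A) hfg
    _ = A * ∫ x in a..b, √(g x) := intervalIntegral.integral_const_mul A _
    _ ≤ A * √(b - a) * √(∫ x in a..b, g x) := by
        rw [mul_assoc]
        exact mul_le_mul_of_nonneg_left (integral_sqrt_le_sqrt_mul_sqrt_integral hab hg hg₀) hA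

theorem le_mul_sqrt_mul_sqrt_integral {X X' Z : ℝ → ℝ} {T A : ℝ} (hA : 0 ≤ A)
    (hX'_int : IntervalIntegrable X' volume 0 T) (hZ_int : IntervalIntegrable Z volume 0 T)
    (hZ_nonneg : ∀ t ∈ Icc 0 T, 0 ≤ Z t) (hX_ac : ∀ t ∈ Icc 0 T, X t = X 0 + ∫ s in 0..t, X' s)
    (hX0 : X 0 = 0) (hODE : ∀ᵐ t ∂volume.restrict (Icc 0 T), X' t ≤ A * √(Z t)) :
    ∀ t ∈ Icc 0 T, X t ≤ A * √t * √(∫ s in 0..t, Z s) := by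
  intro t ht
  have hsub : uIcc 0 t ⊆ uIcc 0 T := uIcc_subset_uIcc_left (Icc_subset_uIcc ht)
  simpa [hX_ac t ht, hX0] using integral_le_mul_sqrt_mul_sqrt_integral ht.1 hA
    (hX'_int.mono_set hsub) (hZ_int.mono_set hsub)
    (fun s hs ↦ hZ_nonneg s ⟨hs.1.le, hs.2.trans ht.2⟩)
    (ae_restrict_of_ae_restrict_of_subset (Icc_subset_Icc_right ht.2) hODE)

theorem add_integral_le_add_integral_mul {T A : ℝ} {X Y Y' Z γ η : ℝ → ℝ}
    (hX_nonneg : ∀ t ∈ Icc 0 T, 0 ≤ X t) (hY_nonneg : ∀ t ∈ Icc 0 T, 0 ≤ Y t)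
    (hZ_nonneg : ∀ t ∈ Icc 0 T, 0 ≤ Z t) (hγ_nonneg : ∀ t ∈ Icc 0 T, 0 ≤ γ t)
    (hη_nonneg : ∀ t ∈ Icc 0 T, 0 ≤ η t)
    (hY'_int : IntervalIntegrable Y' volume 0 T) (hZ_int : IntervalIntegrable Z volume 0 T)
    (hgW : IntervalIntegrable
      (fun t ↦ (γ t + A ^ 2 * t * η t) * (Y t + ∫ s in 0..t, Z s)) volume 0 T)
    (hY_ac : ∀ t ∈ Icc 0 T, Y t = Y 0 + ∫ s in 0..t, Y' s)
    (hX : ∀ t ∈ Icc 0 T, X t ≤ A * √t * √(∫ s in 0..t, Z s))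
    (hODE : ∀ᵐ t ∂volume.restrict (Icc 0 T), Y' t + Z t ≤ γ t * Y t + η t * X t ^ 2) :
    ∀ t ∈ Icc 0 T, Y t + ∫ s in 0..t, Z s ≤
      Y 0 + ∫ s in 0..t, (γ s + A ^ 2 * s * η s) * (Y s + ∫ r in 0..s, Z r) := by
  intro t ht
  have hsub : uIcc 0 t ⊆ uIcc 0 T := uIcc_subset_uIcc_left (Icc_subset_uIcc ht)
  rw [hY_ac t ht, add_assoc, ← intervalIntegral.integral_add (hY'_int.mono_set hsub)
    (hZ_int.mono_set hsub)]
  refine add_le_add_right (intervalIntegral.integral_mono_ae_restrict ht.1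
    ((hY'_int.add hZ_int).mono_set hsub) (hgW.mono_set hsub) ?_) _
  filter_upwards [ae_restrict_of_ae_restrict_of_subset (Icc_subset_Icc_right ht.2) hODE,
    ae_restrict_mem measurableSet_Icc] with s hs hst
  have hsT : s ∈ Icc 0 T := ⟨hst.1, hst.2.trans ht.2⟩
  have hI : 0 ≤ ∫ r in 0..s, Z r :=
    intervalIntegral.integral_nonneg hsT.1 fun r hr ↦ hZ_nonneg r ⟨hr.1, hr.2.trans hsT.2⟩
  have hX2 : X s ^ 2 ≤ A ^ 2 * s * (Y s + ∫ r in 0..s, Z r) := by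
    calc X s ^ 2 ≤ (A * √s * √(∫ r in 0..s, Z r)) ^ 2 :=
          pow_le_pow_left₀ (hX_nonneg s hsT) (hX s hsT) 2
      _ = A ^ 2 * s * ∫ r in 0..s, Z r := by rw [mul_pow, mul_pow, sq_sqrt hsT.1, sq_sqrt hI]
      _ ≤ A ^ 2 * s * (Y s + ∫ r in 0..s, Z r) := by
          have := hY_nonneg s hsT
          exact mul_le_mul_of_nonneg_left (by linarith) (mul_nonneg (sq_nonneg A) hsT.1)
  have := hγ_nonneg s hsT
  have := hη_nonneg s hsT
  calc Y' s + Z s ≤ γ s * Y s + η s * X s ^ 2 := hs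
    _ ≤ γ s * (Y s + ∫ r in 0..s, Z r) + η s * (A ^ 2 * s * (Y s + ∫ r in 0..s, Z r)) := by
        gcongr
        linarith
    _ = _ := by ring

theorem two_function_gronwall_general
    (T : ℝ) (A : ℝ) (hA : 0 < A) (X X' Y Y' Z γ η : ℝ → ℝ)
    (hX_nonneg : ∀ t ∈ Set.Icc 0 T, 0 ≤ X t)
    (hY_nonneg : ∀ t ∈ Set.Icc 0 T, 0 ≤ Y t)
    (hZ_nonneg : ∀ t ∈ Set.Icc 0 T, 0 ≤ Z t)
    (hγ_nonneg : ∀ t ∈ Set.Icc 0 T, 0 ≤ γ t)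
    (hη_nonneg : ∀ t ∈ Set.Icc 0 T, 0 ≤ η t)
    (hZ_meas : AEStronglyMeasurable Z (volume.restrict (Set.Icc 0 T)))
    (hγ_int : IntervalIntegrable γ volume 0 T)
    (hη_int : IntervalIntegrable η volume 0 T)
    (hX'_int : IntervalIntegrable X' volume 0 T)
    (hY'_int : IntervalIntegrable Y' volume 0 T)
    (hX_ac : ∀ t ∈ Set.Icc 0 T, X t = X 0 + ∫ s in (0:ℝ)..t, X' s)
    (hY_ac : ∀ t ∈ Set.Icc 0 T, Y t = Y 0 + ∫ s in (0:ℝ)..t, Y' s)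
    (hODE₁ : ∀ᵐ t ∂(volume.restrict (Set.Icc 0 T)), X' t ≤ A * Real.sqrt (Z t))
    (hODE₂ : ∀ᵐ t ∂(volume.restrict (Set.Icc 0 T)),
      Y' t + Z t ≤ γ t * Y t + η t * X t ^ 2)
    (hX0 : X 0 = 0) :
    ∀ t ∈ Set.Icc 0 T,
      X t ≤ A * Real.sqrt (Y 0) * Real.sqrt t *
          Real.exp ((1 / 2) * ∫ s in (0:ℝ)..t, γ s + A ^ 2 * s * η s) ∧
      Y t + (∫ s in (0:ℝ)..t, Z s) ≤
          Y 0 * Real.exp (∫ s in (0:ℝ)..t, γ s + A ^ 2 * s * η s) := by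
  intro t ht
  have hT : 0 ≤ T := ht.1.trans ht.2
  have hXc := uIcc_of_le hT ▸ continuousOn_Icc_of_eq_add_integral hX'_int hX_ac
  have hYc := uIcc_of_le hT ▸ continuousOn_Icc_of_eq_add_integral hY'_int hY_ac
  have hZ_int : IntervalIntegrable Z volume 0 T :=
    .of_nonneg_of_add_le hT hY'_int ((hγ_int.mul_continuousOn hYc).add
      (hη_int.mul_continuousOn (hXc.pow 2))) hZ_meas hZ_nonneg hODE₂
  have hg_int : IntervalIntegrable (fun s ↦ γ s + A ^ 2 * s * η s) volume 0 T :=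
    hγ_int.add (hη_int.continuousOn_mul (by fun_prop))
  have hg₀ : ∀ s ∈ Icc 0 T, 0 ≤ γ s + A ^ 2 * s * η s := fun s hs ↦
    add_nonneg (hγ_nonneg s hs) (mul_nonneg (mul_nonneg (sq_nonneg A) hs.1) (hη_nonneg s hs))
  have hgW : IntervalIntegrable (fun s ↦ (γ s + A ^ 2 * s * η s) * (Y s + ∫ u in 0..s, Z u))
      volume 0 T := hg_int.mul_continuousOn (hYc.add
    (intervalIntegral.continuousOn_primitive_interval' hZ_int left_mem_uIcc))
  have hX := le_mul_sqrt_mul_sqrt_integral hA.le hX'_int hZ_int hZ_nonneg hX_ac hX0 hODE₁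
  have hW := add_integral_le_add_integral_mul hX_nonneg hY_nonneg hZ_nonneg hγ_nonneg hη_nonneg
    hY'_int hZ_int hgW hY_ac hX hODE₂
  have hWt : Y t + ∫ s in 0..t, Z s ≤ Y 0 * exp (∫ s in 0..t, γ s + A ^ 2 * s * η s) :=
    le_mul_exp_integral_of_le_add_integral hg_int hg₀ hgW hW t ht
  refine ⟨?_, hWt⟩
  calc X t ≤ A * √t * √(∫ s in 0..t, Z s) := hX t ht
    _ ≤ A * √t * √(Y 0 * exp (∫ s in 0..t, γ s + A ^ 2 * s * η s)) := by
        gcongr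
        linarith [hY_nonneg t ht]
    _ = _ := by rw [sqrt_mul (hY_nonneg 0 ⟨le_rfl, hT⟩), ← exp_half]; ring_nf

/-- **Two-function Grönwall-type lemma.** Let `X, Y, Z, γ, η` be non-negative functions on
`[0, T]`, with `X` and `Y` absolutely continuous (encoded by the fundamental theorem of
calculus representations with integrable `X'`, `Y'`), `Z` measurable, `γ` and `η`
integrable over `[0, T]`, and `A > 0`.  Suppose that for a.e. `t ∈ [0, T]`,
`X' t ≤ A * Z t ^ (1/2)` and `Y' t + Z t ≤ γ t * Y t + η t * X t ^ 2`, and `X 0 = 0`.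
Then for every `t ∈ [0, T]`,
`X t ≤ A * (Y 0) ^ (1/2) * t ^ (1/2) * exp ((1/2) * ∫_0^t (γ s + A^2 * s * η s) ds)` and
`Y t + ∫_0^t Z s ds ≤ Y 0 * exp (∫_0^t (γ s + A^2 * s * η s) ds)`. -/
theorem two_function_gronwall
    (T : ℝ) (hT : 0 ≤ T) (A : ℝ) (hA : 0 < A) (X X' Y Y' Z γ η : ℝ → ℝ)
    (hX_nonneg : ∀ t ∈ Set.Icc 0 T, 0 ≤ X t)
    (hY_nonneg : ∀ t ∈ Set.Icc 0 T, 0 ≤ Y t)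
    (hZ_nonneg : ∀ t ∈ Set.Icc 0 T, 0 ≤ Z t)
    (hγ_nonneg : ∀ t ∈ Set.Icc 0 T, 0 ≤ γ t)
    (hη_nonneg : ∀ t ∈ Set.Icc 0 T, 0 ≤ η t)
    (hZ_meas : AEStronglyMeasurable Z (volume.restrict (Set.Icc 0 T)))
    (hγ_int : IntervalIntegrable γ volume 0 T)
    (hη_int : IntervalIntegrable η volume 0 T)
    (hX'_int : IntervalIntegrable X' volume 0 T)
    (hY'_int : IntervalIntegrable Y' volume 0 T)
    (hX_ac : ∀ t ∈ Set.Icc 0 T, X t = X 0 + ∫ s in (0:ℝ)..t, X' s)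
    (hY_ac : ∀ t ∈ Set.Icc 0 T, Y t = Y 0 + ∫ s in (0:ℝ)..t, Y' s)
    (hODE₁ : ∀ᵐ t ∂(volume.restrict (Set.Icc 0 T)), X' t ≤ A * Real.sqrt (Z t))
    (hODE₂ : ∀ᵐ t ∂(volume.restrict (Set.Icc 0 T)),
      Y' t + Z t ≤ γ t * Y t + η t * X t ^ 2)
    (hX0 : X 0 = 0) :
    ∀ t ∈ Set.Icc 0 T,
      X t ≤ A * Real.sqrt (Y 0) * Real.sqrt t *
          Real.exp ((1 / 2) * ∫ s in (0:ℝ)..t, γ s + A ^ 2 * s * η s) ∧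
      Y t + (∫ s in (0:ℝ)..t, Z s) ≤
          Y 0 * Real.exp (∫ s in (0:ℝ)..t, γ s + A ^ 2 * s * η s) :=
  two_function_gronwall_general T A hA X X' Y Y' Z γ η hX_nonneg hY_nonneg hZ_nonneg hγ_nonneg
    hη_nonneg hZ_meas hγ_int hη_int hX'_int hY'_int hX_ac hY_ac hODE₁ hODE₂ hX0
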